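/- Let b > 1 and L ∈ ℕ. With B_L the L×L matrix having entries (B_L)_{i,j} = (1/2)·b^{min(i,j)-1}, let U_L be the upper triangular L×L matrix of all ones on and above the diagonal, and D_L = (1/√2)·diag(1, √(b-1), √(b²-b), …, √(b^{L-1}-b^{L-2})). Then B_L = U_Lᵀ D_L² U_L. -/

import Mathlib

open Matrix

/-- The matrix `B_L` with entries `(1/2)·b^{min(i,j)-1}` (1-based description). -/
noncomputable def Bmat6 (b : ℝ) (L : ℕ) : Matrix (Fin L) (Fin L) ℝ :=
  fun i j => (1 / 2) * b ^ (min i.val j.val)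

/-- The upper triangular matrix of ones on and above the diagonal. -/
def Umat (L : ℕ) : Matrix (Fin L) (Fin L) ℝ :=
  fun i j => if i ≤ j then 1 else 0

/-- The diagonal matrix `D_L = (1/√2)·diag(1, √(b-1), √(b²-b), …)`. -/
noncomputable def Dmat (b : ℝ) (L : ℕ) : Matrix (Fin L) (Fin L) ℝ :=
  Matrix.diagonal (fun i : Fin L =>
    if i.val = 0 then 1 / Real.sqrt 2
    else (1 / Real.sqrt 2) * Real.sqrt (b ^ i.val - b ^ (i.val - 1)))

/-!
The `(i, j)` entry of `Uᵀ diag(d) U` is `∑_{k ≤ min(i,j)} d k`. The squares of the diagonal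
entries of `D_L` are half the increments `1, b - 1, b² - b, …` of the powers of `b`, which
telescope to `b^{min(i,j)}`; `b ≥ 1` makes the increments nonnegative, so the square roots
in `D_L` square back to them.
-/

open Finset

noncomputable def powIncrement (b : ℝ) (k : ℕ) : ℝ :=
  if k = 0 then 1 else b ^ k - b ^ (k - 1)

lemma sum_range_powIncrement (b : ℝ) (m : ℕ) :
    ∑ k ∈ range (m + 1), powIncrement b k = b ^ m := by
  simp only [powIncrement]
  rw [sum_range_succ', if_pos rfl]
  simp only [Nat.succ_ne_zero, if_false, Nat.add_sub_cancel]
  rw [sum_range_sub (b ^ ·), pow_zero, sub_add_cancel]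

lemma Dmat_mul_self {b : ℝ} (hb : 1 ≤ b) (L : ℕ) :
    Dmat b L * Dmat b L = diagonal fun i : Fin L => powIncrement b i / 2 := by
  rw [Dmat, diagonal_mul_diagonal]
  congr 1
  ext i
  simp only [powIncrement]
  split_ifs with hi
  · field_simp
    rw [Real.sq_sqrt zero_le_two]
  · have hinc : 0 ≤ b ^ i.val - b ^ (i.val - 1) :=
      sub_nonneg.mpr (pow_le_pow_right₀ hb (Nat.sub_le _ 1))
    rw [mul_mul_mul_comm, Real.mul_self_sqrt hinc]
    field_simp
    rw [Real.sq_sqrt zero_le_two, mul_comm]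

lemma Umat_transpose_mul_diagonal_mul_Umat_apply {L : ℕ} (d : ℕ → ℝ) (i j : Fin L) :
    ((Umat L)ᵀ * diagonal (fun k : Fin L => d k) * Umat L) i j =
      ∑ k ∈ range (min i.val j.val + 1), d k := by
  have hterm : ∀ k : Fin L, (Umat L)ᵀ i k * d k * Umat L k j =
      if k.val ≤ min i.val j.val then d k else 0 := by
    intro k
    simp only [transpose_apply, Umat, le_min_iff, Fin.le_def]
    split_ifs <;> simp_all
  rw [mul_apply]
  simp only [mul_diagonal, hterm]
  rw [Fin.sum_univ_eq_sum_range (fun k => if k ≤ min i.val j.val then d k else 0),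
    ← sum_filter]
  congr 1
  ext k
  simp only [mem_filter, mem_range]
  omega

theorem Bmat_cholesky_general (b : ℝ) (hb : 1 < b) (L : ℕ) :
    Bmat6 b L = (Umat L)ᵀ * (Dmat b L * Dmat b L) * Umat L := by
  rw [Dmat_mul_self hb.le]
  ext i j
  rw [Umat_transpose_mul_diagonal_mul_Umat_apply (fun k => powIncrement b k / 2), ← sum_div,
    sum_range_powIncrement, Bmat6]
  ring

/-- Cholesky-type decomposition: `B_L = U_Lᵀ D_L² U_L` for `b > 1` and `L ≥ 1`. -/
theorem Bmat_cholesky (b : ℝ) (hb : 1 < b) (L : ℕ) (hL : 1 ≤ L) :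
    Bmat6 b L = (Umat L)ᵀ * (Dmat b L * Dmat b L) * Umat L :=
  Bmat_cholesky_general b hb L
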